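/- arXiv:2007.12209 — 2 statements merged into one kernel-verified Lean document; each statement's English description precedes it below -/
import Mathlib

section
/- Let (R, m, k) be a Noetherian local ring and A an Artinian R-module, and let g_1, …, g_t ∈ Hom_R(A, E_R(k)) be a co-generating set for A (i.e., ∩_i ker g_i = 0). Then the co-generating set is minimal (no proper subset co-generates A) if and only if the restrictions g_i|_{soc A}, viewed in Hom_k(soc A, k), form a k-basis of Hom_k(soc A, k). -/
/-!
Nothing is lost by restricting to the socle: in an Artinian module every nonzero submodule
contains a simple one, which is killed by the maximal ideal, so a family of maps out of `A` has
zero common kernel iff its restrictions to `soc A` do. As `E` is an essential extension of `k`,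
those restrictions are `k`-linear functionals on the `k`-vector space `soc A`. Finitely many
functionals with zero common kernel always span the dual, and one of them lies in the span of
the others iff the other kernels already meet in zero; so minimality is linear independence.
-/

open IsLocalRing

/-- The socle of a module over a local ring: the elements killed by the maximal ideal. -/
def socle (R M : Type*) [CommRing R] [IsLocalRing R] [AddCommGroup M] [Module R M] :
    Submodule R M where
  carrier := {x | ∀ r ∈ maximalIdeal R, r • x = 0}
  add_mem' := by
    intro a b ha hb r hr
    rw [smul_add, ha r hr, hb r hr, add_zero]
  zero_mem' := by intro r hr; simp
  smul_mem' := by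
    intro c x hx r hr
    rw [smul_comm, hx r hr, smul_zero]

open Submodule

section Dual

variable {K V ι : Type*} [Field K] [AddCommGroup V] [Module K V] [Finite ι]

theorem mem_span_range_iff_iInf_ker_le_ker (L : ι → Module.Dual K V) (f : Module.Dual K V) :
    f ∈ span K (Set.range L) ↔ ⨅ i, LinearMap.ker (L i) ≤ LinearMap.ker f := by
  refine ⟨fun hf x hx => ?_, mem_span_of_iInf_ker_le_ker⟩
  exact (span_le (p := LinearMap.ker (Module.Dual.eval K V x))).mpr
    (Set.range_subset_iff.mpr fun i => (mem_iInf _).mp hx i) hf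

theorem span_range_eq_top_of_iInf_ker_eq_bot {L : ι → Module.Dual K V}
    (hL : ⨅ i, LinearMap.ker (L i) = ⊥) : span K (Set.range L) = ⊤ :=
  eq_top_iff.mpr fun _ _ => mem_span_of_iInf_ker_le_ker (hL ▸ bot_le)

theorem linearIndependent_iff_forall_iInf_ker_ne_bot {L : ι → Module.Dual K V}
    (hL : ⨅ i, LinearMap.ker (L i) = ⊥) :
    LinearIndependent K L ↔ ∀ j, ⨅ i ∈ ({j}ᶜ : Set ι), LinearMap.ker (L i) ≠ ⊥ := by
  rw [linearIndependent_iff_notMem_span]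
  refine forall_congr' fun j => not_congr ?_
  have himage : L '' (Set.univ \ {j}) = Set.range fun i : ({j}ᶜ : Set ι) => L i := by
    rw [← Set.compl_eq_univ_sdiff, Set.image_eq_range]
  have hsplit : LinearMap.ker (L j) ⊓ ⨅ i ∈ ({j}ᶜ : Set ι), LinearMap.ker (L i) = ⊥ :=
    (iInf_split_single _ j).symm.trans hL
  rw [himage, mem_span_range_iff_iInf_ker_le_ker]
  rw [iInf_subtype'] at hsplit ⊢
  exact ⟨fun hle => by rwa [inf_eq_right.mpr hle] at hsplit, fun hbot => hbot ▸ bot_le⟩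

end Dual

section Socle

variable {R M N : Type*} [CommRing R] [IsLocalRing R] [AddCommGroup M] [Module R M]
  [AddCommGroup N] [Module R N]

theorem socle_isTorsionBySet : Module.IsTorsionBySet R (socle R M) (maximalIdeal R) :=
  fun x r => Subtype.ext (x.2 r r.2)

noncomputable instance : Module (ResidueField R) (socle R M) := socle_isTorsionBySet.module

instance : IsScalarTower R (ResidueField R) (socle R M) := socle_isTorsionBySet.isScalarTower

theorem map_mem_socle (f : M →ₗ[R] N) {x : M} (hx : x ∈ socle R M) : f x ∈ socle R N :=
  fun r hr => by rw [← map_smul, hx r hr, map_zero]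

theorem le_socle_of_isAtom {P : Submodule R M} (hP : IsAtom P) : P ≤ socle R M := by
  have : IsSimpleModule R P := isSimpleModule_iff_isAtom.mpr hP
  have hann : Module.annihilator R P = maximalIdeal R :=
    eq_maximalIdeal IsSimpleModule.annihilator_isMaximal
  intro x hx r hr
  rw [← hann] at hr
  exact congrArg Subtype.val (Module.mem_annihilator.mp hr ⟨x, hx⟩)

theorem inf_socle_eq_bot_iff [IsArtinian R M] {P : Submodule R M} :
    P ⊓ socle R M = ⊥ ↔ P = ⊥ := by
  refine ⟨fun h => ?_, fun h => by rw [h, bot_inf_eq]⟩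
  obtain hP | ⟨a, ha, haP⟩ := eq_bot_or_exists_atom_le P
  · exact hP
  · exact (ha.1 (le_bot_iff.mp (h ▸ le_inf haP (le_socle_of_isAtom ha)))).elim

theorem socle_le_range_of_essential (ι : ResidueField R →ₗ[R] M)
    (hess : ∀ P : Submodule R M, P ≠ ⊥ → LinearMap.range ι ⊓ P ≠ ⊥) :
    socle R M ≤ LinearMap.range ι := by
  intro v hv
  obtain rfl | hv0 := eq_or_ne v 0
  · exact zero_mem _
  obtain ⟨w, ⟨hwι, hwv⟩, hw0⟩ :=
    exists_mem_ne_zero_of_ne_bot (hess (span R {v}) (by simpa [span_singleton_eq_bot] using hv0))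
  obtain ⟨r, rfl⟩ := mem_span_singleton.mp hwv
  have hr : IsUnit r := notMem_maximalIdeal.mp fun hr => hw0 (hv r hr)
  exact (smul_mem_iff_of_isUnit _ hr).mp hwι

end Socle

section SocleDual

variable {R E A : Type*} [CommRing R] [IsLocalRing R] [AddCommGroup E] [Module R E]
  [AddCommGroup A] [Module R A] {ι : ResidueField R →ₗ[R] E} (hι : Function.Injective ι)
  (hsoc : socle R E ≤ LinearMap.range ι)

/-- `g|_{soc A}` as a `k`-valued functional: it lands in `soc E ⊆ ι(k)`. -/
noncomputable def socleDual (g : A →ₗ[R] E) : Module.Dual (ResidueField R) (socle R A) :=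
  LinearMap.extendScalarsOfSurjective residue_surjective
    ((LinearEquiv.ofInjective ι hι).symm.toLinearMap ∘ₗ
      (g ∘ₗ (socle R A).subtype).codRestrict _ fun x => hsoc (map_mem_socle g x.2))

theorem apply_socleDual (g : A →ₗ[R] E) (x : socle R A) : ι (socleDual hι hsoc g x) = g x :=
  LinearEquiv.ofInjective_symm_apply (h := hι) ι ⟨g x, _⟩

theorem sum_smul_comp_subtype_apply {n : Type*} [Fintype n] (g : n → A →ₗ[R] E) (c : n → R)
    (x : socle R A) : (∑ i, c i • (g i ∘ₗ (socle R A).subtype)) x =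
      ι ((∑ i, residue R (c i) • socleDual hι hsoc (g i)) x) := by
  simp only [LinearMap.sum_apply, LinearMap.smul_apply, map_sum]
  refine Finset.sum_congr rfl fun i _ => ?_
  rw [← ResidueField.algebraMap_eq, algebraMap_smul, map_smul, apply_socleDual]
  rfl

theorem iInf_ker_socleDual_eq_bot_iff [IsArtinian R A] {n : Type*} (g : n → A →ₗ[R] E)
    (s : Set n) : ⨅ i ∈ s, LinearMap.ker (socleDual hι hsoc (g i)) = ⊥ ↔
      ⨅ i ∈ s, LinearMap.ker (g i) = ⊥ := by
  have hmem (x : socle R A) : x ∈ ⨅ i ∈ s, LinearMap.ker (socleDual hι hsoc (g i)) ↔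
      (x : A) ∈ ⨅ i ∈ s, LinearMap.ker (g i) := by
    simp only [mem_iInf, LinearMap.mem_ker, ← apply_socleDual hι hsoc, map_eq_zero_iff ι hι]
  rw [← inf_socle_eq_bot_iff (P := ⨅ i ∈ s, LinearMap.ker (g i)), Submodule.eq_bot_iff,
    Submodule.eq_bot_iff]
  constructor
  · rintro h x ⟨hx, hxs⟩
    exact congrArg Subtype.val (h ⟨x, hxs⟩ ((hmem _).mpr hx))
  · exact fun h x hx => Subtype.ext (h x ⟨(hmem x).mp hx, x.2⟩)

theorem linearIndependent_socleDual_iff {n : Type*} [Fintype n] (g : n → A →ₗ[R] E) :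
    LinearIndependent (ResidueField R) (fun i => socleDual hι hsoc (g i)) ↔
      ∀ c : n → R, ∑ i, c i • (g i ∘ₗ (socle R A).subtype) = 0 →
        ∀ i, c i ∈ maximalIdeal R := by
  have hzero (c : n → R) : ∑ i, c i • (g i ∘ₗ (socle R A).subtype) = 0 ↔
      ∑ i, residue R (c i) • socleDual hι hsoc (g i) = 0 := by
    simp only [LinearMap.ext_iff, sum_smul_comp_subtype_apply hι hsoc, LinearMap.zero_apply,
      map_eq_zero_iff ι hι]
  rw [Fintype.linearIndependent_iff, (residue_surjective (R := R)).comp_left.forall]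
  simp only [Function.comp_apply, hzero, residue_eq_zero_iff]

theorem exists_sum_smul_eq_of_span_eq_top {n : Type*} [Fintype n] (g : n → A →ₗ[R] E)
    (hspan : span (ResidueField R) (Set.range fun i => socleDual hι hsoc (g i)) = ⊤)
    (h : socle R A →ₗ[R] ResidueField R) :
    ∃ c : n → R, ι.comp h = ∑ i, c i • (g i ∘ₗ (socle R A).subtype) := by
  obtain ⟨c, hc⟩ := (mem_span_range_iff_exists_fun _).mp
    (hspan ▸ mem_top : h.extendScalarsOfSurjective residue_surjective ∈ _)
  obtain ⟨c, rfl⟩ := (residue_surjective (R := R)).comp_left c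
  refine ⟨c, LinearMap.ext fun x => ?_⟩
  simp only [Function.comp_apply] at hc
  rw [sum_smul_comp_subtype_apply hι hsoc, hc]
  rfl

end SocleDual

theorem minimal_cogenerating_iff_basis_general
    {R : Type*} [CommRing R] [IsLocalRing R]
    {E : Type*} [AddCommGroup E] [Module R E]
    (ι : ResidueField R →ₗ[R] E) (hι : Function.Injective ι)
    (hess : ∀ N : Submodule R E, N ≠ ⊥ → LinearMap.range ι ⊓ N ≠ ⊥)
    {A : Type*} [AddCommGroup A] [Module R A] [IsArtinian R A]
    {t : ℕ} (g : Fin t → (A →ₗ[R] E))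
    (hcog : (⨅ i, LinearMap.ker (g i)) = ⊥) :
    (∀ j : Fin t, (⨅ i ∈ ({j}ᶜ : Set (Fin t)), LinearMap.ker (g i)) ≠ ⊥) ↔
      ((∀ h : ↥(socle R A) →ₗ[R] ResidueField R, ∃ c : Fin t → R,
          ι.comp h = ∑ i, c i • ((g i).comp (socle R A).subtype)) ∧
        (∀ c : Fin t → R,
          (∑ i, c i • ((g i).comp (socle R A).subtype)) = 0 →
            ∀ i, c i ∈ maximalIdeal R)) := by
  have hsoc := socle_le_range_of_essential ι hess
  have hker : ⨅ i, LinearMap.ker (socleDual hι hsoc (g i)) = ⊥ := by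
    simpa only [iInf_univ] using
      (iInf_ker_socleDual_eq_bot_iff hι hsoc g Set.univ).mpr (by rwa [iInf_univ])
  have hminimal : (∀ j : Fin t, ⨅ i ∈ ({j}ᶜ : Set (Fin t)), LinearMap.ker (g i) ≠ ⊥) ↔
      LinearIndependent (ResidueField R) fun i => socleDual hι hsoc (g i) := by
    rw [linearIndependent_iff_forall_iInf_ker_ne_bot hker]
    exact forall_congr' fun j => (iInf_ker_socleDual_eq_bot_iff hι hsoc g _).not.symm
  rw [hminimal, linearIndependent_socleDual_iff]
  exact (and_iff_right (exists_sum_smul_eq_of_span_eq_top hι hsoc g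
    (span_range_eq_top_of_iInf_ker_eq_bot hker))).symm

/-- Let `(R,m,k)` be Noetherian local, `E = E_R(k)` with embedding
`ι : k → E`, `A` an Artinian module and `g_1, …, g_t : A → E` a co-generating set for
`A` (`⋂ ker g_i = 0`).  Then the co-generating set is minimal (no proper subset
co-generates) iff the restrictions `g_i|_{soc A}`, viewed in `Hom_k(soc A, k)`, form a
`k`-basis: they span (every `h : soc A → k` satisfies
`ι ∘ h = ∑ c_i • (g_i|_{soc A})` for some `c_i`) and they are `k`-linearly independent
(`∑ c_i • (g_i|_{soc A}) = 0` forces all `c_i ∈ m`, i.e. all residues `c̄_i = 0`). -/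
theorem minimal_cogenerating_iff_basis
    {R : Type*} [CommRing R] [IsNoetherianRing R] [IsLocalRing R]
    {E : Type*} [AddCommGroup E] [Module R E]
    (hinj : Module.Injective R E)
    (ι : ResidueField R →ₗ[R] E) (hι : Function.Injective ι)
    (hess : ∀ N : Submodule R E, N ≠ ⊥ → LinearMap.range ι ⊓ N ≠ ⊥)
    {A : Type*} [AddCommGroup A] [Module R A] [IsArtinian R A]
    {t : ℕ} (g : Fin t → (A →ₗ[R] E))
    (hcog : (⨅ i, LinearMap.ker (g i)) = ⊥) :
    (∀ j : Fin t, (⨅ i ∈ ({j}ᶜ : Set (Fin t)), LinearMap.ker (g i)) ≠ ⊥) ↔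
      ((∀ h : ↥(socle R A) →ₗ[R] ResidueField R, ∃ c : Fin t → R,
          ι.comp h = ∑ i, c i • ((g i).comp (socle R A).subtype)) ∧
        (∀ c : Fin t → R,
          (∑ i, c i • ((g i).comp (socle R A).subtype)) = 0 →
            ∀ i, c i ∈ maximalIdeal R)) :=
  minimal_cogenerating_iff_basis_general ι hι hess g hcog
end

section
/- Let R be a complete Noetherian local ring and B an R-module such that B and all of its quotients are Matlis-dualizable. Let {C_i}_{i∈I} be a family of submodules of B. Then, identifying (B/C)^∨ with {f ∈ B^∨ : C ⊆ ker f} ⊆ B^∨ for each submodule C, we have (B/∑_i C_i)^∨ = ∩_i (B/C_i)^∨ and (B/∩_i C_i)^∨ = ∑_i (B/C_i)^∨ as submodules of B^∨. -/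
/-!
The first identity is formal. For the second, the key fact is that `E` is a cogenerator: it is
injective and contains `k`, so every nonzero element of every module is detected by a map to `E`.
If `f` vanishes on `⋂ C_i`, any functional on `B^∨` killing `∑ (B/C_i)^∨` is, by reflexivity of `B`,
evaluation at some `x ∈ B`; every map `B/C_i → E` then kills `x`, so `x ∈ ⋂ C_i` and `f x = 0`.
Hence `f ∈ ∑ (B/C_i)^∨`.

Injectivity of `E` only quantifies over modules in the universe of `E`; to use it through Baer's
criterion, `R` must be small there. It is: `k ↪ E`, each `R/m^n` is built from finitely many
copies of `k`, and `R ↪ ∏ R/m^n` by completeness.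
-/

open IsLocalRing LinearMap

universe w

section Smallness

variable {R : Type*} [CommRing R]

theorem Submodule.small_of_small_quotient {M : Type*} [AddCommGroup M] [Module R M]
    (N : Submodule R M) [Small.{w} N] [Small.{w} (M ⧸ N)] : Small.{w} M :=
  have : Small.{w} (M ⧸ N.toAddSubgroup) := ‹Small.{w} (M ⧸ N)›
  small_map N.toAddSubgroup.addGroupEquivQuotientProdAddSubgroup

theorem Module.IsTorsionBySet.small {I : Ideal R} [Small.{w} (R ⧸ I)] {M : Type*}
    [AddCommGroup M] [Module R M] [Module.Finite R M] (hM : Module.IsTorsionBySet R M I) :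
    Small.{w} M := by
  let := hM.module
  have : Module.Finite (R ⧸ I) M := Module.Finite.of_restrictScalars_finite R (R ⧸ I) M
  exact Module.Finite.small (R ⧸ I) M

variable [IsNoetherianRing R]

theorem Ideal.small_quotient_pow {I : Ideal R} [Small.{w} (R ⧸ I)] (n : ℕ) :
    Small.{w} (R ⧸ I ^ n) := by
  induction n with
  | zero =>
    rw [pow_zero, Ideal.one_eq_top]
    infer_instance
  | succ n ih =>
    -- `R ⧸ I ^ (n + 1)` is an extension of `R ⧸ I ^ n` by `I ^ n / I ^ (n + 1)`.
    let N : Submodule R (R ⧸ I ^ (n + 1)) := Submodule.map (I ^ (n + 1)).mkQ (I ^ n)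
    have hN : Module.IsTorsionBySet R N I := by
      rintro ⟨_, ⟨y, hy, rfl⟩⟩ ⟨r, hr⟩
      refine Subtype.ext ((Submodule.Quotient.mk_eq_zero _).mpr ?_)
      rw [pow_succ']
      exact Ideal.mul_mem_mul hr hy
    have : Small.{w} N := hN.small
    have : Small.{w} ((R ⧸ I ^ (n + 1)) ⧸ N) :=
      small_map (Submodule.quotientQuotientEquivQuotient _ _
        (Ideal.pow_le_pow_right n.le_succ)).toEquiv
    exact N.small_of_small_quotient

theorem small_of_isHausdorff (I : Ideal R) [IsHausdorff I R] [Small.{w} (R ⧸ I)] :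
    Small.{w} R := by
  have := Ideal.small_quotient_pow (I := I)
  refine small_of_injective (f := fun x (n : ℕ) ↦ Ideal.Quotient.mk (I ^ n) x) fun x y h ↦ ?_
  exact congrFun (IsHausdorff.funext' I (f := fun _ : Unit ↦ x) (g := fun _ ↦ y)
    fun n _ ↦ congrFun h n) ()

end Smallness

section Duality

variable {R : Type*} [CommRing R] {E : Type*} [AddCommGroup E] [Module R E]
  {B : Type*} [AddCommGroup B] [Module R B]

theorem LinearMap.mem_ker_lcomp_subtype_iff {C : Submodule R B} {f : B →ₗ[R] E} :
    f ∈ ker (lcomp R E C.subtype) ↔ C ≤ ker f := by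
  simp only [mem_ker, LinearMap.ext_iff, lcomp_apply,
    Submodule.subtype_apply, zero_apply, Subtype.forall]
  rfl

theorem LinearMap.ker_lcomp_iSup_subtype {I : Type*} (C : I → Submodule R B) :
    ker (lcomp R E (⨆ i, C i).subtype) = ⨅ i, ker (lcomp R E (C i).subtype) := by
  ext f
  simp only [Submodule.mem_iInf, mem_ker_lcomp_subtype_iff, iSup_le_iff]

theorem LinearMap.iSup_ker_lcomp_subtype_le {I : Type*} (C : I → Submodule R B) :
    ⨆ i, ker (lcomp R E (C i).subtype) ≤ ker (lcomp R E (⨅ i, C i).subtype) :=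
  iSup_le fun i _ hf ↦
    mem_ker_lcomp_subtype_iff.mpr ((iInf_le C i).trans (mem_ker_lcomp_subtype_iff.mp hf))

variable [IsLocalRing R] (hE : Module.Baer R E) {ι : ResidueField R →ₗ[R] E}
  (hι : Function.Injective ι)
include hE hι

theorem Module.Baer.exists_apply_ne_zero {M : Type*} [AddCommGroup M] [Module R M] {x : M}
    (hx : x ≠ 0) : ∃ φ : M →ₗ[R] E, φ x ≠ 0 := by
  have hJ : Ideal.torsionOf R M x ≤ maximalIdeal R :=
    le_maximalIdeal fun h ↦ hx ((Ideal.torsionOf_eq_top_iff R x).mp h)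
  -- `R ∙ x ≅ R ⧸ ann x` surjects onto the residue field, which embeds into `E`.
  let g : (R ∙ x) →ₗ[R] E := ι ∘ₗ Submodule.factor hJ ∘ₗ
    (Ideal.quotTorsionOfEquivSpanSingleton R M x).symm.toLinearMap
  obtain ⟨φ, hφ⟩ := hE.extension_property (R ∙ x).subtype Subtype.val_injective g
  refine ⟨φ, fun h ↦ ?_⟩
  have hgx : g ⟨x, Submodule.mem_span_singleton_self x⟩ = ι 1 := by
    have : (Ideal.quotTorsionOfEquivSpanSingleton R M x).symm
        ⟨x, Submodule.mem_span_singleton_self x⟩ = Submodule.Quotient.mk 1 := by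
      rw [LinearEquiv.symm_apply_eq, Ideal.quotTorsionOfEquivSpanSingleton_apply_mk, one_smul]
    exact congrArg (fun q ↦ ι (Submodule.factor hJ q)) this
  have := congr($hφ ⟨x, Submodule.mem_span_singleton_self x⟩)
  simp only [coe_comp, Function.comp_apply, Submodule.subtype_apply, h, hgx] at this
  exact one_ne_zero (hι (this.symm.trans (map_zero ι).symm))

theorem Module.Baer.mem_of_forall_le_ker {M : Type*} [AddCommGroup M] [Module R M]
    {C : Submodule R M} {x : M} (h : ∀ g : M →ₗ[R] E, C ≤ ker g → g x = 0) : x ∈ C := by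
  by_contra hx
  obtain ⟨φ, hφ⟩ := hE.exists_apply_ne_zero hι ((Submodule.Quotient.mk_eq_zero C).not.mpr hx)
  exact hφ (h (φ ∘ₗ C.mkQ) fun y hy ↦ by simp [(Submodule.Quotient.mk_eq_zero C).mpr hy])

theorem LinearMap.ker_lcomp_iInf_subtype
    (hB : Function.Surjective ((LinearMap.id : (B →ₗ[R] E) →ₗ[R] (B →ₗ[R] E)).flip))
    {I : Type*} (C : I → Submodule R B) :
    ker (lcomp R E (⨅ i, C i).subtype) = ⨆ i, ker (lcomp R E (C i).subtype) := by
  refine le_antisymm (fun f hf ↦ ?_) (iSup_ker_lcomp_subtype_le C)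
  refine hE.mem_of_forall_le_ker hι fun ψ hψ ↦ ?_
  obtain ⟨x, rfl⟩ := hB ψ
  have hx : x ∈ ⨅ i, C i := Submodule.mem_iInf _ |>.mpr fun i ↦
    hE.mem_of_forall_le_ker hι fun g hg ↦
      hψ (le_iSup (fun i ↦ ker (lcomp R E (C i).subtype)) i (mem_ker_lcomp_subtype_iff.mpr hg))
  exact mem_ker_lcomp_subtype_iff.mp hf hx

end Duality

theorem dual_of_sup_and_inf_general
    {R : Type*} [CommRing R] [IsNoetherianRing R] [IsLocalRing R]
    [IsAdicComplete (maximalIdeal R) R]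
    {E : Type*} [AddCommGroup E] [Module R E]
    (hinj : Module.Injective R E)
    (ι : ResidueField R →ₗ[R] E) (hι : Function.Injective ι)
    {B : Type*} [AddCommGroup B] [Module R B]
    -- `B` and all of its quotient modules are Matlis dualizable:
    (hB : Function.Bijective
      ((LinearMap.id : (B →ₗ[R] E) →ₗ[R] (B →ₗ[R] E)).flip))
    {I : Type*} (C : I → Submodule R B) :
    LinearMap.ker (LinearMap.lcomp R E (⨆ i, C i).subtype)
        = ⨅ i, LinearMap.ker (LinearMap.lcomp R E (C i).subtype) ∧
    LinearMap.ker (LinearMap.lcomp R E (⨅ i, C i).subtype)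
        = ⨆ i, LinearMap.ker (LinearMap.lcomp R E (C i).subtype) := by
  have : Small.{_} (R ⧸ maximalIdeal R) := small_of_injective hι
  have : Small.{_} R := small_of_isHausdorff (maximalIdeal R)
  have hE : Module.Baer R E := Module.Baer.of_injective hinj
  exact ⟨ker_lcomp_iSup_subtype C, ker_lcomp_iInf_subtype hE hι hB.2 C⟩

/-- Let `R` be a complete Noetherian local ring, `E = E_R(k)`, and `B` a
module all of whose quotients are Matlis-dualizable.  For a family `{C_i}` of
submodules of `B`, identifying `(B/C)^∨` with `{f ∈ B^∨ : C ⊆ ker f}`, we have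
`(B/∑ C_i)^∨ = ⋂ (B/C_i)^∨` and `(B/⋂ C_i)^∨ = ∑ (B/C_i)^∨` inside `B^∨`. -/
theorem dual_of_sup_and_inf
    {R : Type*} [CommRing R] [IsNoetherianRing R] [IsLocalRing R]
    [IsAdicComplete (maximalIdeal R) R]
    {E : Type*} [AddCommGroup E] [Module R E]
    (hinj : Module.Injective R E)
    (ι : ResidueField R →ₗ[R] E) (hι : Function.Injective ι)
    (hess : ∀ N : Submodule R E, N ≠ ⊥ → LinearMap.range ι ⊓ N ≠ ⊥)
    {B : Type*} [AddCommGroup B] [Module R B]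
    -- `B` and all of its quotient modules are Matlis dualizable:
    (hB : Function.Bijective
      ((LinearMap.id : (B →ₗ[R] E) →ₗ[R] (B →ₗ[R] E)).flip))
    (hquot : ∀ C : Submodule R B, Function.Bijective
      ((LinearMap.id : ((B ⧸ C) →ₗ[R] E) →ₗ[R] ((B ⧸ C) →ₗ[R] E)).flip))
    {I : Type*} (C : I → Submodule R B) :
    LinearMap.ker (LinearMap.lcomp R E (⨆ i, C i).subtype)
        = ⨅ i, LinearMap.ker (LinearMap.lcomp R E (C i).subtype) ∧
    LinearMap.ker (LinearMap.lcomp R E (⨅ i, C i).subtype)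
        = ⨆ i, LinearMap.ker (LinearMap.lcomp R E (C i).subtype) :=
  dual_of_sup_and_inf_general hinj ι hι hB C
end
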